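/- arXiv:2502.15347 — 4 statements merged into one kernel-verified Lean document; each statement's English description precedes it below -/
import Mathlib

section
/- Let α ∈ ℝ be such that α/π is irrational, and let T_α denote the rotation of the circle 𝕊¹ = ℝ/2πℤ by angle α (i.e., x ↦ x + α). Then there do not exist Lebesgue measurable sets B₀, B₁ ⊆ 𝕊¹ with 𝕊¹ = B₀ ∪ B₁, B₀ ∩ B₁ = ∅, T_α(B₀) ∩ B₀ = ∅ and T_α(B₁) ∩ B₁ = ∅. In other words, the graph G_α on 𝕊¹ in which x ≠ y are adjacent iff T_α(x) = y or T_α(y) = x admits no proper 2-coloring with Lebesgue measurable color classes. -/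
/-!
If `B₀, B₁` were such a coloring, the rotation `x ↦ x + α` would map each class into the
other, so `B₀` would be invariant under the rotation by `2α`. Since `2α / 2π = α / π` is
irrational, that rotation is ergodic, so `B₀` is null or conull. But the rotation by `α`
preserves measure and exchanges `B₀` with its complement, so both would be null.
-/

open MeasureTheory

instance : Fact (0 < 2 * Real.pi) := ⟨by positivity⟩

theorem preimage_add_right_eq_compl_of_two_coloring {G : Type*} [Add G] {a : G}
    {B₀ B₁ : Set G} (hcover : B₀ ∪ B₁ = Set.univ) (hdisj : B₀ ∩ B₁ = ∅)
    (h₀ : (fun x => x + a) '' B₀ ∩ B₀ = ∅) (h₁ : (fun x => x + a) '' B₁ ∩ B₁ = ∅) :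
    (fun x => x + a) ⁻¹' B₀ = B₀ᶜ := by
  have hB₁ : B₁ = B₀ᶜ := (IsCompl.of_eq hdisj hcover).compl_eq.symm
  subst hB₁
  ext x
  constructor
  · intro hxa hx
    exact (Set.eq_empty_iff_forall_notMem.mp h₀) (x + a) ⟨⟨x, hx, rfl⟩, hxa⟩
  · intro hx
    by_contra hxa
    exact (Set.eq_empty_iff_forall_notMem.mp h₁) (x + a) ⟨⟨x, hx, rfl⟩, hxa⟩

theorem Ergodic.preimage_add_right_ne_compl {G : Type*} [AddGroup G] [MeasurableSpace G]
    [MeasurableAdd G] {μ : Measure G} [μ.IsAddRightInvariant] [NeZero μ] {a : G}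
    (herg : Ergodic (fun x => x + (a + a)) μ) {B : Set G} (hB : NullMeasurableSet B μ) :
    (fun x => x + a) ⁻¹' B ≠ Bᶜ := by
  intro hswap
  have hmem : ∀ x, x + a ∈ B ↔ x ∉ B := fun x => Set.ext_iff.mp hswap x
  have hinv : (fun x => x + (a + a)) ⁻¹' B = B := by
    ext x
    simp only [Set.mem_preimage, ← add_assoc, hmem, not_not]
  have hcompl : μ Bᶜ = μ B := by
    rw [← hswap, measure_preimage_add_right]
  have hnull : μ B = 0 := by
    rcases herg.quasiErgodic.ae_empty_or_univ₀ hB (Filter.EventuallyEq.of_eq hinv) with h | h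
    · exact ae_eq_empty.mp h
    · exact hcompl ▸ ae_eq_univ.mp h
  have huniv : μ Set.univ = 0 :=
    le_antisymm ((measure_univ_le_add_compl B).trans_eq (by rw [hcompl, hnull, add_zero])) bot_le
  exact NeZero.ne μ (Measure.measure_univ_eq_zero.mp huniv)

theorem AddCircle.ergodic_add_right_coe_of_irrational {p a : ℝ} [Fact (0 < p)]
    (h : Irrational (a / p)) : Ergodic (fun x => x + (a : AddCircle p)) :=
  ergodic_add_right.mpr (denseRange_zsmul_iff.mp (denseRange_zsmul_coe_iff.mpr h))

/-- **Irrational rotations admit no measurable proper 2-coloring.** If `α/π` is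
irrational, then the circle `ℝ/2πℤ` cannot be partitioned into two Lebesgue measurable
sets `B₀, B₁` each of which is moved off itself by the rotation `x ↦ x + α`; that is,
the graph of the rotation admits no proper 2-coloring with Lebesgue measurable color
classes. -/
theorem irrational_rotation_no_measurable_two_coloring (α : ℝ)
    (hα : Irrational (α / Real.pi)) :
    ¬ ∃ B₀ B₁ : Set (AddCircle (2 * Real.pi)),
        NullMeasurableSet B₀ volume ∧ NullMeasurableSet B₁ volume ∧
        B₀ ∪ B₁ = Set.univ ∧ B₀ ∩ B₁ = ∅ ∧
        ((fun x => x + (α : AddCircle (2 * Real.pi))) '' B₀) ∩ B₀ = ∅ ∧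
        ((fun x => x + (α : AddCircle (2 * Real.pi))) '' B₁) ∩ B₁ = ∅ := by
  rintro ⟨B₀, B₁, hB₀, -, hcover, hdisj, h₀, h₁⟩
  have hdouble : Irrational ((α + α) / (2 * Real.pi)) := by
    rwa [← two_mul, mul_div_mul_left _ _ two_ne_zero]
  have herg : Ergodic (fun x => x + ((α : AddCircle (2 * Real.pi)) + α)) := by
    simpa only [AddCircle.coe_add] using AddCircle.ergodic_add_right_coe_of_irrational hdouble
  exact herg.preimage_add_right_ne_compl hB₀
    (preimage_add_right_eq_compl_of_two_coloring hcover hdisj h₀ h₁)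
end

section
/- Let Δ ≥ 1 and let G be a Borel graph with Δ(G) ≤ Δ. Then G admits a Borel vertex coloring with Δ+1 colors and a Borel edge coloring with 2Δ−1 colors; in particular χ_B(G) ≤ Δ+1 and χ'_B(G) ≤ 2Δ−1. -/
/-!
If a Borel set `E ⊆ X × Y` has sections of size at most `n`, its projection is Borel: for `U`
in a countable basis of `Y`, the points of `E` that are alone in their section within `U` cover
`E` and project injectively (Lusin–Souslin), and removing the other points only needs the case
`n - 1`. So in a Borel graph of bounded degree, the vertices with a neighbour in a Borel set form
a Borel set.

Separating each vertex from its finitely many neighbours by a basic open set gives a Borel proper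
colouring by `ℕ`. Recolouring its classes greedily in order, each vertex avoiding the colours of
its at most `Δ` neighbours in earlier classes, uses `Δ + 1` colours and stays Borel by induction
on the class. Edge colourings are vertex colourings of the line graph, which has degree at most
`2Δ - 2` and becomes a Borel graph on `V × V` once each edge is oriented along a Borel injection
`V → ℝ`.
-/

open Set MeasureTheory TopologicalSpace

universe u

section Projection

variable {X Y : Type u}

def isolatedIn (E : Set (X × Y)) (U : Set Y) : Set (X × Y) :=
  {p ∈ E | p.2 ∈ U ∧ ∀ z ∈ U, (p.1, z) ∈ E → z = p.2}

variable {E : Set (X × Y)} {U : Set Y}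

lemma injOn_fst_isolatedIn : InjOn Prod.fst (isolatedIn E U) := by
  rintro ⟨x, y⟩ ⟨-, -, hunique⟩ ⟨x', y'⟩ ⟨hy'E, hy'U, -⟩ (rfl : x = x')
  rw [hunique y' hy'U hy'E]

lemma image_fst_eq_biUnion_isolatedIn [TopologicalSpace Y] [T1Space Y] {b : Set (Set Y)}
    (hb : IsTopologicalBasis b) (hfin : ∀ x, (Prod.mk x ⁻¹' E).Finite) :
    Prod.fst '' E = ⋃ U ∈ b, Prod.fst '' isolatedIn E U := by
  refine subset_antisymm ?_ (iUnion₂_subset fun U _ => image_mono fun p hp => hp.1)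
  rintro _ ⟨⟨x, y⟩, hxy, rfl⟩
  have hopen : IsOpen (Prod.mk x ⁻¹' E \ {y})ᶜ := ((hfin x).sdiff.isClosed).isOpen_compl
  obtain ⟨U, hUb, hyU, hUsub⟩ :=
    hb.exists_subset_of_mem_open (a := y) (fun h => h.2 rfl) hopen
  refine mem_biUnion hUb ⟨(x, y), ⟨hxy, hyU, fun z hzU hzE => ?_⟩, rfl⟩
  by_contra hzy
  exact hUsub hzU ⟨hzE, hzy⟩

def otherPointsIn (E : Set (X × Y)) (U : Set Y) : Set ((X × Y) × Y) :=
  {r | r.1 ∈ E ∧ (r.1.1, r.2) ∈ E ∧ r.2 ∈ U ∧ r.2 ≠ r.1.2}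

lemma isolatedIn_eq_sdiff :
    isolatedIn E U = {p ∈ E | p.2 ∈ U} \ Prod.fst '' otherPointsIn E U := by
  ext p
  constructor
  · rintro ⟨hE, hU, hunique⟩
    refine ⟨⟨hE, hU⟩, ?_⟩
    rintro ⟨⟨p', z⟩, ⟨-, hzE, hzU, hzy⟩, rfl⟩
    exact hzy (hunique z hzU hzE)
  · rintro ⟨⟨hE, hU⟩, hno⟩
    refine ⟨hE, hU, fun z hzU hzE => ?_⟩
    by_contra hzy
    exact hno ⟨(p, z), ⟨hE, hzE, hzU, hzy⟩, rfl⟩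

lemma encard_preimage_mk_otherPointsIn_le {n : ℕ} (hsec : ∀ x, (Prod.mk x ⁻¹' E).encard ≤ n + 1)
    (p : X × Y) : (Prod.mk p ⁻¹' otherPointsIn E U).encard ≤ n := by
  obtain ⟨x, y⟩ := p
  by_cases hy : y ∈ Prod.mk x ⁻¹' E
  · have hsub : Prod.mk (x, y) ⁻¹' otherPointsIn E U ⊆ Prod.mk x ⁻¹' E \ {y} :=
      fun z hz => ⟨hz.2.1, hz.2.2.2⟩
    have hcard := encard_sdiff_singleton_add_one hy ▸ hsec x
    rw [ENat.add_le_add_iff_right ENat.one_ne_top] at hcard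
    exact (encard_le_encard hsub).trans hcard
  · have hempty : Prod.mk (x, y) ⁻¹' otherPointsIn E U = ∅ :=
      eq_empty_of_forall_notMem fun z hz => hy hz.1
    simp [hempty]

lemma measurableSet_otherPointsIn [MeasurableSpace X] [MeasurableSpace Y] [MeasurableEq Y]
    (hE : MeasurableSet E) (hU : MeasurableSet U) : MeasurableSet (otherPointsIn E U) :=
  (hE.preimage measurable_fst).inter <|
    (hE.preimage (measurable_fst.fst.prodMk measurable_snd)).inter <|
    (hU.preimage measurable_snd).inter
    (measurableSet_eq_fun measurable_snd measurable_fst.snd).compl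

variable [MeasurableSpace X] [StandardBorelSpace X] [MeasurableSpace Y] [StandardBorelSpace Y]

/-- A bounded-multiplicity case of the Lusin–Novikov uniformization theorem. -/
theorem measurableSet_image_fst_of_encard_le (n : ℕ) (hE : MeasurableSet E)
    (hsec : ∀ x, (Prod.mk x ⁻¹' E).encard ≤ n) : MeasurableSet (Prod.fst '' E) := by
  obtain ⟨_, _, _, _⟩ := exists_opensMeasurableSpace_of_countablySeparated Y
  induction n generalizing X with
  | zero =>
    have hempty : E = ∅ := eq_empty_of_forall_notMem fun p hp => by
      have h := hsec p.1
      rw [Nat.cast_zero, nonpos_iff_eq_zero, encard_eq_zero] at h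
      exact h.subset (show p.2 ∈ Prod.mk p.1 ⁻¹' E from hp)
    simp [hempty]
  | succ n ih =>
    have hisolated : ∀ U, IsOpen U → MeasurableSet (isolatedIn E U) := fun U hU => by
      rw [isolatedIn_eq_sdiff]
      exact (hE.inter (hU.measurableSet.preimage measurable_snd)).diff
        (ih (measurableSet_otherPointsIn hE hU.measurableSet)
          (encard_preimage_mk_otherPointsIn_le (by exact_mod_cast hsec)))
    rw [image_fst_eq_biUnion_isolatedIn (isBasis_countableBasis Y)
      fun x => finite_of_encard_le_coe (hsec x)]
    exact .biUnion (countable_countableBasis Y) fun U hU =>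
      (hisolated U (isOpen_of_mem_countableBasis hU)).image_of_measurable_injOn measurable_fst
        injOn_fst_isolatedIn

end Projection

namespace SimpleGraph

variable {W : Type u} {G : SimpleGraph W} {n : ℕ}

/-- The colour `v` gets when processed at stage `i`: one not used by the neighbours `w` of
earlier stages `c₀ w < i`, each of which was coloured at its own stage `c₀ w`. -/
noncomputable def greedyStage (G : SimpleGraph W) (c₀ : W → ℕ) (n : ℕ) : ℕ → W → Fin (n + 1)
  | i, v => Classical.epsilon fun k =>
      k ∉ {k | ∃ w, G.Adj v w ∧ ∃ _ : c₀ w < i, greedyStage G c₀ n (c₀ w) w = k}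

def earlierColors (G : SimpleGraph W) (c₀ : W → ℕ) (n i : ℕ) (v : W) : Set (Fin (n + 1)) :=
  (fun w => greedyStage G c₀ n (c₀ w) w) '' {w | G.Adj v w ∧ c₀ w < i}

lemma greedyStage_eq (c₀ : W → ℕ) (i : ℕ) (v : W) :
    greedyStage G c₀ n i v = Classical.epsilon (· ∉ earlierColors G c₀ n i v) := by
  rw [greedyStage]
  simp only [earlierColors, exists_prop, image, mem_ofPred_eq, and_assoc]

lemma greedyStage_notMem_earlierColors (hdeg : ∀ v, (G.neighborSet v).encard ≤ n) (c₀ : W → ℕ)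
    (i : ℕ) (v : W) : greedyStage G c₀ n i v ∉ earlierColors G c₀ n i v := by
  rw [greedyStage_eq]
  refine Classical.epsilon_spec (p := (· ∉ earlierColors G c₀ n i v)) ?_
  by_contra! hall
  have hcard : (univ : Set (Fin (n + 1))).encard ≤ n :=
    calc (univ : Set (Fin (n + 1))).encard ≤ (earlierColors G c₀ n i v).encard :=
          encard_le_encard fun k _ => hall k
      _ ≤ (G.neighborSet v).encard :=
          (encard_image_le _ _).trans (encard_le_encard fun _ hw => hw.1)
      _ ≤ n := hdeg v
  simp only [encard_univ, ENat.card_eq_coe_fintype_card, Fintype.card_fin] at hcard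
  norm_cast at hcard
  omega

variable [MeasurableSpace W] [StandardBorelSpace W]

theorem measurableSet_exists_adj_mem (hG : MeasurableSet {p : W × W | G.Adj p.1 p.2})
    (hdeg : ∀ v, (G.neighborSet v).encard ≤ n) {S : Set W} (hS : MeasurableSet S) :
    MeasurableSet {v | ∃ w ∈ S, G.Adj v w} := by
  have hproj := measurableSet_image_fst_of_encard_le n (hG.inter (hS.preimage measurable_snd))
    fun v => (encard_le_encard fun w hw => hw.1).trans (hdeg v)
  convert hproj using 1
  ext v
  exact ⟨fun ⟨w, hwS, hvw⟩ => ⟨(v, w), ⟨hvw, hwS⟩, rfl⟩,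
    fun ⟨⟨_, w⟩, ⟨hvw, hwS⟩, hv⟩ => hv ▸ ⟨w, hwS, hvw⟩⟩

theorem exists_measurable_coloring_nat (hG : MeasurableSet {p : W × W | G.Adj p.1 p.2})
    (hdeg : ∀ v, (G.neighborSet v).encard ≤ n) : ∃ C : G.Coloring ℕ, Measurable C := by
  classical
  obtain ⟨_, _, _, _⟩ := exists_opensMeasurableSpace_of_countablySeparated W
  have hb := (isBasis_countableBasis W).insert_empty
  have hb_countable := (countable_countableBasis W).insert ∅
  set B : ℕ → Set W := enumerateCountable hb_countable ∅
  have hB_open : ∀ i, IsOpen (B i) := fun i =>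
    hb.isOpen (enumerateCountable_mem hb_countable (mem_insert _ _) i)
  have hB : ∀ v, ∃ i, v ∈ B i ∧ ∀ w ∈ B i, ¬ G.Adj v w := by
    intro v
    obtain ⟨U, hUb, hvU, hUsub⟩ := hb.exists_subset_of_mem_open G.notMem_neighborSet_self
      (finite_of_encard_le_coe (hdeg v)).isClosed.isOpen_compl
    obtain ⟨i, rfl⟩ := subset_range_enumerate hb_countable ∅ hUb
    exact ⟨i, hvU, fun w hw => hUsub hw⟩
  refine ⟨Coloring.mk (fun v => Nat.find (hB v)) fun {v w} hvw heq => ?_, ?_⟩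
  · have hv := Nat.find_spec (hB v)
    rw [heq] at hv
    exact hv.2 w (Nat.find_spec (hB w)).1 hvw
  · refine measurable_find hB fun i => ?_
    convert (hB_open i).measurableSet.diff
      (measurableSet_exists_adj_mem hG hdeg (hB_open i).measurableSet) using 1
    ext v
    simp

lemma measurable_greedyStage (hG : MeasurableSet {p : W × W | G.Adj p.1 p.2})
    (hdeg : ∀ v, (G.neighborSet v).encard ≤ n) {c₀ : W → ℕ} (hc₀ : Measurable c₀) (i : ℕ) :
    Measurable (greedyStage G c₀ n i) := by
  induction i using Nat.strong_induction_on with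
  | _ i ih =>
    have hearlier : Measurable (earlierColors G c₀ n i) := by
      refine measurable_set_iff.2 fun k => measurableSet_setOfPred.1 ?_
      have hcolored : {w | c₀ w < i ∧ greedyStage G c₀ n (c₀ w) w = k} =
          ⋃ j < i, c₀ ⁻¹' {j} ∩ greedyStage G c₀ n j ⁻¹' {k} := by
        ext w
        simp
      have hS : MeasurableSet {w | c₀ w < i ∧ greedyStage G c₀ n (c₀ w) w = k} :=
        hcolored ▸ .biUnion (to_countable _) fun j hj =>
          (hc₀ (measurableSet_singleton j)).inter (ih j hj (measurableSet_singleton k))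
      convert measurableSet_exists_adj_mem hG hdeg hS using 1
      ext v
      simp only [earlierColors, mem_image, mem_ofPred_eq]
      exact ⟨fun ⟨w, ⟨hvw, hwi⟩, hwk⟩ => ⟨w, ⟨hwi, hwk⟩, hvw⟩,
        fun ⟨w, ⟨hwi, hwk⟩, hvw⟩ => ⟨w, ⟨hvw, hwi⟩, hwk⟩⟩
    have hpick := measurable_of_countable fun s : Set (Fin (n + 1)) =>
      Classical.epsilon (· ∉ s)
    rw [show greedyStage G c₀ n i = _ from funext (greedyStage_eq c₀ i)]
    exact hpick.comp hearlier

theorem exists_measurable_coloring (hG : MeasurableSet {p : W × W | G.Adj p.1 p.2})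
    (hdeg : ∀ v, (G.neighborSet v).encard ≤ n) :
    ∃ C : G.Coloring (Fin (n + 1)), Measurable C := by
  obtain ⟨C₀, hC₀⟩ := exists_measurable_coloring_nat hG hdeg
  have hlt : ∀ v w, G.Adj v w → C₀ w < C₀ v →
      greedyStage G C₀ n (C₀ v) v ≠ greedyStage G C₀ n (C₀ w) w := fun v w hvw hwv heq =>
    greedyStage_notMem_earlierColors hdeg C₀ (C₀ v) v ⟨w, ⟨hvw, hwv⟩, heq.symm⟩
  refine ⟨Coloring.mk (fun v => greedyStage G C₀ n (C₀ v) v) fun {v w} hvw => ?_, ?_⟩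
  · rcases (C₀.valid hvw).lt_or_gt with h | h
    · exact (hlt w v hvw.symm h).symm
    · exact hlt v w hvw h
  · exact (measurable_from_prod_countable_left (f := fun p : W × ℕ => greedyStage G C₀ n p.2 p.1)
      fun i => measurable_greedyStage hG hdeg hC₀ i).comp (measurable_id.prodMk hC₀)

end SimpleGraph

section Orientation

variable {V : Type u} (e : V → ℝ)

noncomputable def orient (x y : V) : V × V := if e x < e y then (x, y) else (y, x)

variable {e}

lemma orient_eq_or (x y : V) : orient e x y = (x, y) ∨ orient e x y = (y, x) := by
  unfold orient
  split_ifs <;> simp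

lemma orient_comm (he : Function.Injective e) {x y : V} (hxy : x ≠ y) :
    orient e x y = orient e y x := by
  unfold orient
  rcases (he.ne hxy).lt_or_gt with h | h
  · rw [if_pos h, if_neg h.asymm]
  · rw [if_neg h.asymm, if_pos h]

lemma measurable_orient [MeasurableSpace V] (he : Measurable e) :
    Measurable fun p : V × V => orient e p.1 p.2 :=
  Measurable.ite (measurableSet_lt (he.comp measurable_fst) (he.comp measurable_snd))
    (measurable_fst.prodMk measurable_snd) (measurable_snd.prodMk measurable_fst)

end Orientation

namespace SimpleGraph

variable {V : Type u} {G : SimpleGraph V} {e : V → ℝ}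

variable (G e) in
def orientedLineGraph : SimpleGraph (V × V) where
  Adj p q := p ≠ q ∧ (G.Adj p.1 p.2 ∧ e p.1 < e p.2) ∧ (G.Adj q.1 q.2 ∧ e q.1 < e q.2) ∧
    (p.1 = q.1 ∨ p.1 = q.2 ∨ p.2 = q.1 ∨ p.2 = q.2)
  symm := ⟨fun _ _ h => ⟨h.1.symm, h.2.2.1, h.2.1, by tauto⟩⟩
  loopless := ⟨fun _ h => h.1 rfl⟩

lemma adj_orient_lt (he : Function.Injective e) {x y : V} (hxy : G.Adj x y) :
    G.Adj (orient e x y).1 (orient e x y).2 ∧ e (orient e x y).1 < e (orient e x y).2 := by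
  unfold orient
  split_ifs with h
  · exact ⟨hxy, h⟩
  · exact ⟨hxy.symm, (not_lt.1 h).lt_of_ne (he.ne hxy.ne.symm)⟩

lemma orientedLineGraph_adj_orient (he : Function.Injective e) {x y z : V} (hxy : G.Adj x y)
    (hxz : G.Adj x z) (hyz : y ≠ z) :
    (G.orientedLineGraph e).Adj (orient e x y) (orient e x z) := by
  refine ⟨?_, adj_orient_lt he hxy, adj_orient_lt he hxz, ?_⟩ <;>
  rcases orient_eq_or (e := e) x y with h₁ | h₁ <;>
    rcases orient_eq_or (e := e) x z with h₂ | h₂ <;>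
    simp [h₁, h₂, hyz, hxz.ne]

lemma measurableSet_adj_orientedLineGraph [MeasurableSpace V] [StandardBorelSpace V]
    (he : Measurable e) (hG : MeasurableSet {p : V × V | G.Adj p.1 p.2}) :
    MeasurableSet {r : (V × V) × (V × V) | (G.orientedLineGraph e).Adj r.1 r.2} := by
  have hO : MeasurableSet {p : V × V | G.Adj p.1 p.2 ∧ e p.1 < e p.2} :=
    hG.inter (measurableSet_lt (he.comp measurable_fst) (he.comp measurable_snd))
  exact (measurableSet_eq_fun measurable_fst measurable_snd).compl.inter <|
    (hO.preimage measurable_fst).inter <| (hO.preimage measurable_snd).inter <|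
    (measurableSet_eq_fun measurable_fst.fst measurable_snd.fst).union <|
    (measurableSet_eq_fun measurable_fst.fst measurable_snd.snd).union <|
    (measurableSet_eq_fun measurable_fst.snd measurable_snd.fst).union
      (measurableSet_eq_fun measurable_fst.snd measurable_snd.snd)

lemma neighborSet_orientedLineGraph_subset {x y : V} (hxy : e x < e y) :
    (G.orientedLineGraph e).neighborSet (x, y) ⊆
      orient e x '' (G.neighborSet x \ {y}) ∪ orient e y '' (G.neighborSet y \ {x}) := by
  rintro ⟨a, b⟩ ⟨hne, -, ⟨hab, hlt⟩, hshare⟩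
  rcases hshare with h | h | h | h <;> simp only at h <;> subst h
  · exact .inl ⟨b, ⟨hab, fun hb => hne (by rw [hb.out])⟩, by simp [orient, hlt]⟩
  · exact .inl ⟨a, ⟨hab.symm, fun ha => lt_asymm hlt (ha.out ▸ hxy)⟩,
      by simp [orient, not_lt.2 hlt.le]⟩
  · exact .inr ⟨b, ⟨hab, fun hb => lt_asymm hlt (hb.out ▸ hxy)⟩, by simp [orient, hlt]⟩
  · exact .inr ⟨a, ⟨hab.symm, fun ha => hne (by rw [ha.out])⟩,
      by simp [orient, not_lt.2 hlt.le]⟩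

lemma encard_neighborSet_orientedLineGraph_le {Δ : ℕ} (hdeg : ∀ v, (G.neighborSet v).encard ≤ Δ)
    (p : V × V) : ((G.orientedLineGraph e).neighborSet p).encard ≤ (2 * Δ - 2 : ℕ) := by
  obtain ⟨x, y⟩ := p
  by_cases hp : G.Adj x y ∧ e x < e y
  swap
  · have : (G.orientedLineGraph e).neighborSet (x, y) = ∅ :=
      eq_empty_of_forall_notMem fun q hq => hp hq.2.1
    simp [this]
  have hx := encard_sdiff_singleton_add_one (show y ∈ G.neighborSet x from hp.1) ▸ hdeg x
  have hy := encard_sdiff_singleton_add_one (show x ∈ G.neighborSet y from hp.1.symm) ▸ hdeg y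
  calc _ ≤ _ := encard_le_encard (neighborSet_orientedLineGraph_subset hp.2)
    _ ≤ _ := encard_union_le _ _
    _ ≤ (G.neighborSet x \ {y}).encard + (G.neighborSet y \ {x}).encard :=
        add_le_add (encard_image_le _ _) (encard_image_le _ _)
    _ ≤ (2 * Δ - 2 : ℕ) := by
        generalize (G.neighborSet x \ {y}).encard = a at hx ⊢
        generalize (G.neighborSet y \ {x}).encard = b at hy ⊢
        lift a to ℕ using (by rintro rfl; simp at hx)
        lift b to ℕ using (by rintro rfl; simp at hy)
        norm_cast at hx hy ⊢
        omega

variable [MeasurableSpace V] [StandardBorelSpace V]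

theorem exists_measurable_edgeColoring (hG : MeasurableSet {p : V × V | G.Adj p.1 p.2}) {Δ : ℕ}
    (hdeg : ∀ v, (G.neighborSet v).encard ≤ Δ) :
    ∃ d : V → V → Fin (2 * Δ - 2 + 1), Measurable (fun p : V × V => d p.1 p.2) ∧
      (∀ x y, G.Adj x y → d x y = d y x) ∧
      (∀ x y z, G.Adj x y → G.Adj x z → y ≠ z → d x y ≠ d x z) := by
  obtain ⟨e, he⟩ := exists_measurableEmbedding_real V
  obtain ⟨C, hC⟩ := exists_measurable_coloring
    (measurableSet_adj_orientedLineGraph he.measurable hG)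
    (encard_neighborSet_orientedLineGraph_le (e := e) hdeg)
  exact ⟨fun x y => C (orient e x y), hC.comp (measurable_orient he.measurable),
    fun x y hxy => congrArg C (orient_comm he.injective hxy.ne),
    fun x y z hxy hxz hyz => C.valid (orientedLineGraph_adj_orient he.injective hxy hxz hyz)⟩

end SimpleGraph

/-- **Borel greedy colorings (Kechris–Solecki–Todorčević).** Every Borel graph `G` of
maximum degree at most `Δ` admits a Borel proper vertex coloring with `Δ + 1` colors and
a Borel proper edge coloring with `2Δ - 1` colors. -/
theorem borel_greedy_colorings {V : Type} [MeasurableSpace V] [StandardBorelSpace V]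
    (G : SimpleGraph V) (Δ : ℕ) (hΔ : 1 ≤ Δ)
    (hadj : MeasurableSet {p : V × V | G.Adj p.1 p.2})
    (hdeg : ∀ v, (G.neighborSet v).Finite ∧ (G.neighborSet v).ncard ≤ Δ) :
    (∃ c : V → Fin (Δ + 1), Measurable c ∧ ∀ x y, G.Adj x y → c x ≠ c y) ∧
    (∃ d : V → V → Fin (2 * Δ - 1),
      Measurable (fun p : V × V => d p.1 p.2) ∧
      (∀ x y, G.Adj x y → d x y = d y x) ∧
      (∀ x y z, G.Adj x y → G.Adj x z → y ≠ z → d x y ≠ d x z)) := by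
  have hdeg' : ∀ v, (G.neighborSet v).encard ≤ Δ := fun v => by
    rw [← (hdeg v).1.cast_ncard_eq]
    exact_mod_cast (hdeg v).2
  obtain ⟨C, hC⟩ := G.exists_measurable_coloring hadj hdeg'
  have hedge := G.exists_measurable_edgeColoring hadj hdeg'
  rw [show 2 * Δ - 2 + 1 = 2 * Δ - 1 by omega] at hedge
  exact ⟨⟨C, hC, fun x y hxy => C.valid hxy⟩, hedge⟩
end

section
/- Let Δ ∈ ℕ, let T be a tree (a connected acyclic graph) equipped with a proper edge coloring c_T : E(T) → [Δ], and let H be a graph equipped with an edge Δ-labeling c_H : E(H) → [Δ]. Let φ : V(T) → V(H) be a graph homomorphism that preserves edge labels, i.e., c_H({φ(u),φ(v)}) = c_T({u,v}) for every edge {u,v} of T. If H is acyclic, then φ is injective. -/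
/-!
A proper edge colouring of `T` that is preserved by `φ` forces `φ` to be injective on the
neighbourhood of every vertex, so `φ` maps a path of `T` to a walk of `H` that never
immediately backtracks. In an acyclic graph such a walk is a path, so distinct vertices of
`T`, joined by a nontrivial path, cannot have the same image.
-/

namespace SimpleGraph

variable {V W : Type*} {G : SimpleGraph V} {H : SimpleGraph W}

def Hom.IsLocallyInjective (f : G →g H) : Prop :=
  ∀ ⦃v u w : V⦄, G.Adj v u → G.Adj v w → f u = f w → u = w

namespace Hom.IsLocallyInjective

variable {f : G →g H}

theorem isChain_ne_edges_map (hf : f.IsLocallyInjective) :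
    ∀ {u v : V} {p : G.Walk u v}, List.IsChain (· ≠ ·) p.edges →
      List.IsChain (· ≠ ·) (p.map f).edges
  | _, _, .nil, _ => by simp
  | _, _, .cons _ .nil, _ => by simp
  | _, _, .cons (v := b) hab (.cons (v := c) hbc q), hp => by
    rw [Walk.edges_cons, Walk.edges_cons, List.isChain_cons_cons] at hp
    obtain ⟨hne, hq⟩ := hp
    -- `s(a, b) ≠ s(b, c)` says `a ≠ c`, and `f` keeps the two neighbours of `b` apart
    have hac : f _ ≠ f c := fun h =>
      hne (by rw [hf hab.symm hbc h, Sym2.eq_swap])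
    have ih := isChain_ne_edges_map hf (p := .cons hbc q) hq
    rw [Walk.map_cons, Walk.edges_cons] at ih ⊢
    refine List.isChain_cons_cons.mpr ⟨fun h => hac ?_, ih⟩
    rcases Sym2.eq_iff.mp h with ⟨h1, h2⟩ | ⟨h1, -⟩
    · exact h1.trans h2
    · exact h1

theorem isPath_map (hf : f.IsLocallyInjective) (hH : H.IsAcyclic) {u v : V}
    {p : G.Walk u v} (hp : p.IsPath) : (p.map f).IsPath :=
  (hH.isPath_iff_isChain _).mpr (hf.isChain_ne_edges_map hp.isTrail.edges_nodup.isChain)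

theorem injective (hf : f.IsLocallyInjective) (hG : G.Preconnected) (hH : H.IsAcyclic) :
    Function.Injective f := by
  classical
  intro a b hab
  obtain ⟨p, hp⟩ := (hG a b).some.toPath
  have hloop : ((p.map f).copy rfl hab.symm).IsPath :=
    (Walk.isPath_copy _ rfl hab.symm).mpr (hf.isPath_map hH hp)
  have hnil : p.Nil := by
    simpa only [Walk.nil_copy, Walk.nil_map_iff] using Walk.isPath_iff_nil.mp hloop
  exact hnil.eq

end Hom.IsLocallyInjective

theorem Hom.isLocallyInjective_of_preserves_properColoring {α : Type*} (f : G →g H)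
    (cG : Sym2 V → α) (cH : Sym2 W → α)
    (hcG : ∀ x y z : V, G.Adj x y → G.Adj x z → y ≠ z → cG s(x, y) ≠ cG s(x, z))
    (hlabel : ∀ u v : V, G.Adj u v → cH s(f u, f v) = cG s(u, v)) :
    f.IsLocallyInjective := by
  intro v u w hvu hvw hfuw
  by_contra hne
  exact hcG v u w hvu hvw hne (by rw [← hlabel v u hvu, ← hlabel v w hvw, hfuw])

end SimpleGraph

/-- **Label-preserving homomorphisms into acyclic graphs are injective.** Let `T` be a
tree with a proper edge coloring `cT` with `Δ` colors, let `H` be a graph with an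
arbitrary edge `Δ`-labeling `cH`, and let `φ` be a graph homomorphism from `T` to `H`
preserving edge labels. If `H` is acyclic then `φ` is injective. -/
theorem label_preserving_hom_injective {VT VH : Type} (Δ : ℕ)
    (T : SimpleGraph VT) (H : SimpleGraph VH) (hT : T.IsTree)
    (cT : Sym2 VT → Fin Δ)
    (hcT : ∀ x y z : VT, T.Adj x y → T.Adj x z → y ≠ z → cT s(x, y) ≠ cT s(x, z))
    (cH : Sym2 VH → Fin Δ)
    (φ : VT → VH)
    (hhom : ∀ u v : VT, T.Adj u v → H.Adj (φ u) (φ v))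
    (hlabel : ∀ u v : VT, T.Adj u v → cH s(φ u, φ v) = cT s(u, v))
    (hH : H.IsAcyclic) :
    Function.Injective φ :=
  let f : T →g H := ⟨φ, hhom _ _⟩
  (f.isLocallyInjective_of_preserves_properColoring cT cH hcT hlabel).injective
    hT.connected.preconnected hH
end

section
/- Let Δ, k ∈ ℕ, let T be a tree (a connected acyclic graph) equipped with a proper edge coloring c_T : E(T) → [Δ], and let H be a graph equipped with an edge Δ-labeling c_H : E(H) → [Δ]. Let φ : V(T) → V(H) be a graph homomorphism that preserves edge labels, i.e., c_H({φ(u),φ(v)}) = c_T({u,v}) for every edge {u,v} of T. If the girth of H is greater than 2k+2, then φ is injective on every ball of radius k+1 in T, i.e., for every vertex v of T, the restriction of φ to B_T(v, k+1) is injective. -/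
/-!
Suppose `φ a = φ b` with `a, b` at distance at most `2k + 2` in `T`, and map a shortest path from
`a` to `b` into `H`. Consecutive edges of a path in `T` get distinct colours, so their images carry
distinct labels and differ. A walk that never immediately backtracks is either a path, which here
is closed and hence trivial, so `a = b`; or the first return to a vertex closes a cycle no longer
than the walk, contradicting the girth bound.
-/

namespace SimpleGraph.Walk

variable {V W α : Type*} {G : SimpleGraph V} {H : SimpleGraph W}

theorem isPath_or_egirth_le_length_of_isChain_ne_edges {u v : V} (w : G.Walk u v)
    (hw : w.edges.IsChain (· ≠ ·)) : w.IsPath ∨ G.egirth ≤ w.length := by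
  classical
  induction w with
  | nil => exact .inl .nil
  | @cons u x v h r ih =>
    rw [edges_cons, List.isChain_cons] at hw
    obtain ⟨hfirst, hr⟩ := hw
    rcases ih hr with hrp | hle
    · by_cases hu : u ∈ r.support
      · right
        -- not the back-and-forth `u x u`, since the first two edges differ
        have hcycle : (cons h (r.takeUntil u hu)).IsCycle := by
          refine (cons_isCycle_iff _ h).mpr ⟨hrp.takeUntil hu, fun he => ?_⟩
          have hback := (hrp.takeUntil hu).eq_adj_toWalk_of_mem_edges (Sym2.eq_swap ▸ he)
          have hhead : r.edges.head? = some s(x, u) := by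
            rw [← take_spec r hu, edges_append, hback]
            simp
          exact hfirst _ hhead Sym2.eq_swap
        calc G.egirth ≤ _ := egirth_le_length hcycle
          _ ≤ _ := by
            simp only [length_cons, Nat.cast_le]
            exact Nat.succ_le_succ (r.length_takeUntil_le_length hu)
      · exact .inl (hrp.cons hu)
    · exact .inr (hle.trans (by simp))

theorem IsPath.isChain_ne_edges_map (f : G →g H) (cG : Sym2 V → α) (cH : Sym2 W → α)
    (hcG : ∀ x y z : V, G.Adj x y → G.Adj x z → y ≠ z → cG s(x, y) ≠ cG s(x, z))
    (hf : ∀ u v : V, G.Adj u v → cH s(f u, f v) = cG s(u, v)) {u v : V} {p : G.Walk u v}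
    (hp : p.IsPath) : (p.map f).edges.IsChain (· ≠ ·) := by
  induction p with
  | nil => simp
  | @cons u x v h r ih =>
    cases r with
    | nil => simp
    | @cons _ y _ h' r =>
      have hne : u ≠ y := fun huy => ((cons_isPath_iff _ _).mp hp).2 (by simp [huy])
      refine List.isChain_cons_cons.mpr ⟨fun heq => ?_, ih hp.of_cons⟩
      apply hcG x u y h.symm h' hne
      rw [← hf _ _ h.symm, ← hf _ _ h', Sym2.eq_swap]
      exact congrArg cH heq

end SimpleGraph.Walk

open SimpleGraph Walk

/-- **Label-preserving homomorphisms into high-girth graphs are locally injective.** Let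
`T` be a tree with a proper edge coloring `cT` with `Δ` colors, let `H` be a graph with
an arbitrary edge `Δ`-labeling `cH`, and let `φ` be a graph homomorphism from `T` to `H`
preserving edge labels. If the girth of `H` is greater than `2k + 2`, then `φ` is
injective on every ball of radius `k + 1` in `T`. -/
theorem label_preserving_hom_locally_injective {VT VH : Type} (Δ k : ℕ)
    (T : SimpleGraph VT) (H : SimpleGraph VH) (hT : T.IsTree)
    (cT : Sym2 VT → Fin Δ)
    (hcT : ∀ x y z : VT, T.Adj x y → T.Adj x z → y ≠ z → cT s(x, y) ≠ cT s(x, z))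
    (cH : Sym2 VH → Fin Δ)
    (φ : VT → VH)
    (hhom : ∀ u v : VT, T.Adj u v → H.Adj (φ u) (φ v))
    (hlabel : ∀ u v : VT, T.Adj u v → cH s(φ u, φ v) = cT s(u, v))
    (hgirth : (2 * k + 2 : ℕ∞) < H.egirth) :
    ∀ v : VT, Set.InjOn φ {u | T.dist v u ≤ k + 1} := by
  intro v a ha b hb hφ
  have hconn : T.Connected := hT.connected
  have hdist : T.dist a b ≤ 2 * k + 2 := by
    simp only [Set.mem_ofPred_eq] at ha hb
    calc T.dist a b ≤ T.dist a v + T.dist v b := hconn.dist_triangle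
      _ = T.dist v a + T.dist v b := by rw [dist_comm]
      _ ≤ 2 * k + 2 := by omega
  let f : T →g H := ⟨φ, hhom _ _⟩
  obtain ⟨p, hp, hlen⟩ := hconn.exists_path_of_dist a b
  rcases (p.map f).isPath_or_egirth_le_length_of_isChain_ne_edges
      (hp.isChain_ne_edges_map f cT cH hcT hlabel) with hpath | hle
  · exact ((nil_map_iff f).mp (hpath.nil_iff_eq.mpr hφ)).eq
  · rw [length_map, hlen] at hle
    exact ((hgirth.trans_le hle).not_ge (by exact_mod_cast hdist)).elim
end
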